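/- Let n ≥ 2 be a natural number and let x_1, ..., x_n be nonnegative real numbers with arithmetic mean A = (x_1 + ... + x_n)/n and geometric mean G = (x_1 x_2 ... x_n)^(1/n). Then A - G = (1/(n(n-1))) ∑_{1 ≤ i < j ≤ n} (√(x_i) - √(x_j))^2 if and only if one of the following holds: (i) n = 2; (ii) all but one of the numbers x_1, ..., x_n are zero; (iii) all of the numbers x_1, ..., x_n are equal. -/

import Mathlib

open Finset Real

/-! With `y i = √(x i)`, the identity `∑_{i<j} (y i - y j)² = n ∑ y i² - (∑ y i)²` shows that
the right-hand side equals `A - M`, where `M` is the arithmetic mean of the `n(n-1)` products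
`y i * y j` with `i ≠ j`. Each `y i` occurs `2(n-1)` times among them, so their geometric mean is
`G`, and the equation says that AM-GM is an equality for these products, i.e. that they are all
equal. For `n ≥ 3`, a nonzero common value `y i * y k = y j * y k` forces `y i = y j`, while a zero
one allows at most one nonzero `y i`. -/

section PairSums

variable {ι : Type*} [Fintype ι]

theorem sum_sum_eq_two_nsmul_sum_Ioi_of_symm [LinearOrder ι] [LocallyFiniteOrderTop ι]
    {M : Type*} [AddCommMonoid M] (f : ι → ι → M) (hf : ∀ i j, f i j = f j i)
    (hdiag : ∀ i, f i i = 0) :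
    ∑ i, ∑ j, f i j = 2 • ∑ i, ∑ j ∈ Ioi i, f i j := by
  have split : ∀ i j, f i j = (if i < j then f i j else 0) + (if j < i then f j i else 0) := by
    intro i j
    rcases lt_trichotomy i j with h | rfl | h
    · simp [h, h.not_gt]
    · simp [hdiag]
    · simp [h, h.not_gt, hf i j]
  calc ∑ i, ∑ j, f i j
      = ∑ i, ∑ j, (if i < j then f i j else 0) + ∑ i, ∑ j, (if j < i then f j i else 0) := by
        simp only [← sum_add_distrib, ← split]
    _ = 2 • ∑ i, ∑ j ∈ Ioi i, f i j := by
        rw [sum_comm (f := fun i j => if j < i then f j i else 0), ← two_nsmul]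
        simp only [← sum_filter, filter_lt_eq_Ioi]

theorem sum_sum_sub_sq {R : Type*} [CommRing R] (y : ι → R) :
    ∑ i, ∑ j, (y i - y j) ^ 2 = 2 * (Fintype.card ι * ∑ i, y i ^ 2 - (∑ i, y i) ^ 2) := by
  simp only [sub_sq, sum_add_distrib, sum_sub_distrib, sum_const, card_univ, nsmul_eq_mul,
    ← mul_sum, ← sum_mul]
  ring

theorem sum_sum_Ioi_sub_sq [LinearOrder ι] [LocallyFiniteOrderTop ι] {R : Type*} [CommRing R]
    [NoZeroDivisors R] [CharZero R] (y : ι → R) :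
    ∑ i, ∑ j ∈ Ioi i, (y i - y j) ^ 2 = Fintype.card ι * ∑ i, y i ^ 2 - (∑ i, y i) ^ 2 := by
  refine mul_left_cancel₀ (two_ne_zero (α := R)) ?_
  rw [← sum_sum_sub_sq, sum_sum_eq_two_nsmul_sum_Ioi_of_symm _ (fun _ _ => by ring)
    (fun _ => by ring), two_nsmul, two_mul]

end PairSums

section OffDiag

variable {ι : Type*}

theorem offDiag_eq_filter_product [DecidableEq ι] (s : Finset ι) :
    s.offDiag = (s ×ˢ s).filter fun p => p.1 ≠ p.2 := by
  ext; simp [and_assoc]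

theorem natCast_card_offDiag {R : Type*} [Ring R] (s : Finset ι) :
    (#s.offDiag : R) = #s * (#s - 1) := by
  rw [offDiag_card, Nat.cast_sub (Nat.le_mul_self _), Nat.cast_mul, mul_sub, mul_one]

theorem prod_offDiag_fst {M : Type*} [CommMonoid M] (s : Finset ι) (f : ι → M) :
    ∏ p ∈ s.offDiag, f p.1 = ∏ i ∈ s, f i ^ (#s - 1) := by
  classical
  rw [offDiag_eq_filter_product, prod_filter, prod_product]
  refine prod_congr rfl fun i hi => ?_
  rw [← prod_filter]
  simp only [ne_eq, prod_const, filter_ne, card_erase_of_mem hi]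

theorem prod_offDiag_snd {M : Type*} [CommMonoid M] (s : Finset ι) (f : ι → M) :
    ∏ p ∈ s.offDiag, f p.2 = ∏ i ∈ s, f i ^ (#s - 1) := by
  classical
  rw [offDiag_eq_filter_product, prod_filter, prod_product_right]
  refine prod_congr rfl fun i hi => ?_
  rw [← prod_filter]
  simp only [ne_eq, prod_const, filter_ne', card_erase_of_mem hi]

theorem sum_offDiag_mul {R : Type*} [CommRing R] (s : Finset ι) (y : ι → R) :
    ∑ p ∈ s.offDiag, y p.1 * y p.2 = (∑ i ∈ s, y i) ^ 2 - ∑ i ∈ s, y i ^ 2 := by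
  classical
  rw [eq_sub_iff_add_eq, sq, sum_mul_sum, ← sum_product', ← diag_union_offDiag,
    sum_union (disjoint_diag_offDiag s), sum_diag, add_comm]
  simp only [sq]

end OffDiag

theorem Real.geom_mean_eq_arith_mean_iff {ι : Type*} (s : Finset ι) (hs : s.Nonempty) (z : ι → ℝ)
    (hz : ∀ i ∈ s, 0 ≤ z i) :
    (∏ i ∈ s, z i) ^ (1 / #s : ℝ) = (∑ i ∈ s, z i) / #s ↔ ∀ i ∈ s, ∀ j ∈ s, z i = z j := by
  have hcard : (#s : ℝ) ≠ 0 := by exact_mod_cast hs.card_pos.ne'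
  rw [← geom_mean_eq_arith_mean_weighted_iff_of_pos s (fun _ => 1 / #s) z
    (fun _ _ => by positivity) (by simp [hcard]) hz, finsetProd_rpow s z hz, ← mul_sum]
  ring_nf

theorem Fintype.exists_ne_ne_of_two_lt_card {ι : Type*} [Fintype ι] (h : 2 < Fintype.card ι)
    (i j : ι) : ∃ k, k ≠ i ∧ k ≠ j := by
  classical
  have hcard : 1 < #(univ.erase i) := by rw [card_erase_of_mem (mem_univ i), card_univ]; omega
  obtain ⟨k, hk, hkj⟩ := exists_mem_ne hcard j
  exact ⟨k, ne_of_mem_erase hk, hkj⟩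

theorem forall_ne_mul_eq_mul_iff {ι M : Type*} [Fintype ι] [CommMonoidWithZero M]
    [IsCancelMulZero M] (y : ι → M) :
    (∀ i j, i ≠ j → ∀ k l, k ≠ l → y i * y j = y k * y l) ↔
      Fintype.card ι = 2 ∨ (∃ i, ∀ j, j ≠ i → y j = 0) ∨ ∀ i j, y i = y j := by
  constructor
  · intro h
    by_cases hcard : Fintype.card ι = 2
    · exact .inl hcard
    by_cases hzero : ∀ i j, i ≠ j → y i * y j = 0
    · by_cases hall : ∀ i, y i = 0
      · exact .inr <| .inr fun i j => by rw [hall i, hall j]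
      push Not at hall
      obtain ⟨i, hi⟩ := hall
      exact .inr <| .inl ⟨i, fun j hj => (mul_eq_zero.1 (hzero i j hj.symm)).resolve_left hi⟩
    push Not at hzero
    obtain ⟨i₀, j₀, hij₀, hprod⟩ := hzero
    have htwo : 2 < Fintype.card ι := by
      have := Fintype.one_lt_card_iff.2 ⟨i₀, j₀, hij₀⟩
      omega
    refine .inr <| .inr fun i j => ?_
    by_cases hij : i = j
    · rw [hij]
    obtain ⟨k, hki, hkj⟩ := Fintype.exists_ne_ne_of_two_lt_card htwo i j
    have hk : y k ≠ 0 := left_ne_zero_of_mul (h k i hki i₀ j₀ hij₀ ▸ hprod)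
    exact mul_right_cancel₀ hk (h i k (Ne.symm hki) j k (Ne.symm hkj))
  · rintro (hcard | ⟨c, hc⟩ | hall) i j hij k l hkl
    · have hmem : ∀ m, m = i ∨ m = j := by
        by_contra! hm
        obtain ⟨m, hmi, hmj⟩ := hm
        exact hcard.not_gt (Fintype.two_lt_card_iff.2 ⟨i, j, m, hij, Ne.symm hmi, Ne.symm hmj⟩)
      rcases hmem k with rfl | rfl <;> rcases hmem l with rfl | rfl <;> simp_all [mul_comm]
    · have hzero : ∀ a b, a ≠ b → y a * y b = 0 := by
        intro a b hab
        by_cases ha : a = c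
        · rw [hc b (ha ▸ hab.symm), mul_zero]
        · rw [hc a ha, zero_mul]
      rw [hzero i j hij, hzero k l hkl]
    · rw [hall i k, hall j l]

section SqrtPairs

variable {ι : Type*} [Fintype ι]

theorem sum_offDiag_sqrt_mul_sqrt_div_card [LinearOrder ι] [LocallyFiniteOrderTop ι]
    (x : ι → ℝ) (hx : ∀ i, 0 ≤ x i) (hcard : 2 ≤ Fintype.card ι) :
    (∑ p ∈ univ.offDiag, √(x p.1) * √(x p.2)) / #(univ : Finset ι).offDiag =
      (∑ i, x i) / Fintype.card ι - 1 / (Fintype.card ι * (Fintype.card ι - 1)) *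
        ∑ i, ∑ j ∈ Ioi i, (√(x i) - √(x j)) ^ 2 := by
  have hN : (Fintype.card ι : ℝ) - 1 ≠ 0 := by
    rw [sub_ne_zero]; exact_mod_cast (by omega : Fintype.card ι ≠ 1)
  rw [sum_sum_Ioi_sub_sq, sum_offDiag_mul _ fun i => √(x i), natCast_card_offDiag, card_univ]
  simp only [sq_sqrt (hx _)]
  field_simp
  ring

theorem prod_offDiag_sqrt_mul_sqrt_rpow (x : ι → ℝ) (hx : ∀ i, 0 ≤ x i)
    (hcard : 2 ≤ Fintype.card ι) :
    (∏ p ∈ univ.offDiag, √(x p.1) * √(x p.2)) ^ (1 / #(univ : Finset ι).offDiag : ℝ) =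
      (∏ i, x i) ^ (1 / Fintype.card ι : ℝ) := by
  have hN : (Fintype.card ι : ℝ) - 1 ≠ 0 := by
    rw [sub_ne_zero]; exact_mod_cast (by omega : Fintype.card ι ≠ 1)
  rw [prod_mul_distrib, prod_offDiag_fst _ fun i => √(x i), prod_offDiag_snd _ fun i => √(x i),
    ← prod_mul_distrib, natCast_card_offDiag, card_univ]
  simp only [← mul_pow, mul_self_sqrt (hx _)]
  rw [prod_pow, ← rpow_natCast, ← rpow_mul (prod_nonneg fun i _ => hx i),
    Nat.cast_pred (by omega)]
  congr 1
  field_simp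

end SqrtPairs

/-- Equality case of (3.1): `A - G = (1/(n(n-1))) ∑_{i<j} (√(x i) - √(x j))^2` if and only if
(i) `n = 2`, or (ii) all but one of the `x i` are zero, or (iii) all the `x i` are equal. -/
theorem second_strong_cauchy_equality_iff (n : ℕ) (hn : 2 ≤ n) (x : Fin n → ℝ)
    (hx : ∀ i, 0 ≤ x i)
    (A G : ℝ) (hA : A = (∑ i, x i) / n) (hG : G = (∏ i, x i) ^ ((1 : ℝ) / n)) :
    A - G =
        (1 / (n * (n - 1)) : ℝ) *
          ∑ i, ∑ j ∈ Finset.Ioi i, (Real.sqrt (x i) - Real.sqrt (x j)) ^ 2 ↔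
      n = 2 ∨ (∃ i, ∀ j, j ≠ i → x j = 0) ∨ (∀ i j, x i = x j) := by
  have hcard : 2 ≤ Fintype.card (Fin n) := by rwa [Fintype.card_fin]
  have hAM := sum_offDiag_sqrt_mul_sqrt_div_card x hx hcard
  have hGM := prod_offDiag_sqrt_mul_sqrt_rpow x hx hcard
  rw [Fintype.card_fin, ← hA] at hAM
  rw [Fintype.card_fin, ← hG] at hGM
  have hne : (univ.offDiag : Finset (Fin n × Fin n)).Nonempty :=
    ⟨(⟨0, by omega⟩, ⟨1, by omega⟩), by simp⟩
  rw [sub_eq_iff_eq_add', eq_comm, ← eq_sub_iff_add_eq, ← hAM, ← hGM,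
    geom_mean_eq_arith_mean_iff _ hne _ fun p _ => by positivity]
  simp only [mem_offDiag, mem_univ, true_and, Prod.forall, ← sqrt_eq_zero (hx _),
    ← sqrt_inj (hx _) (hx _)]
  simpa only [Fintype.card_fin] using forall_ne_mul_eq_mul_iff fun i => √(x i)
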